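/- arXiv:0809.1669 — 4 statements merged into one kernel-verified Lean document; each statement's English description precedes it below -/
import Mathlib

section
/- For every real number y, |y| ≤ 1 + (1/2)(y² − 1) − (1/9)(y² − 1)² + (1/36)(y² − 1)³. -/
lemma aux1 (t : ℝ) (h0 : 0 ≤ t) :
    t ≤ 1 + (1/2) * (t^2 - 1) - (1/9) * (t^2 - 1)^2 + (1/36) * (t^2 - 1)^3 := by
  nlinarith [sq_nonneg ((t-1)*(t^2+t-3)), sq_nonneg ((t-1)*(t-2))]

theorem stmt1 (y : ℝ) :
    |y| ≤ 1 + (1/2) * (y^2 - 1) - (1/9) * (y^2 - 1)^2 + (1/36) * (y^2 - 1)^3 := by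
  have := aux1 |y| (abs_nonneg y)
  simpa [sq_abs] using this
end

section
/- Suppose (λ(p))_p are real numbers indexed by primes satisfying ∑_{p ≤ z} (λ(p)² − 1)/p = O(1), ∑_{p ≤ z} (λ(p)⁴ − 2)/p = O(1), and ∑_{p ≤ z} (λ(p)⁶ − 5)/p = O(1) uniformly in z ≥ 2. Then ∑_{p ≤ z} (1 − |λ(p)|)²/p ≥ (1/6) log log z + O(1). -/
open Finset Real

private noncomputable def invHom : ℕ →* ℝ where
  toFun n := (n : ℝ)⁻¹
  map_one' := by norm_num
  map_mul' m n := by push_cast; exact mul_inv _ _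

private lemma mertens_lower (z : ℝ) (hz : 2 ≤ z) :
    Real.log (Real.log z) - 2 * ∑' n : ℕ, ((n : ℝ) ^ 2)⁻¹
      ≤ ∑ p ∈ (⌊z⌋₊ + 1).primesBelow, (1 : ℝ) / p := by
  set N := ⌊z⌋₊ + 1 with hN
  have hnorm : ∀ {p : ℕ}, p.Prime → ‖invHom p‖ < 1 := by
    intro p hp
    have h2p : (2 : ℝ) ≤ p := by exact_mod_cast hp.two_le
    rw [show invHom p = (p : ℝ)⁻¹ from rfl, Real.norm_eq_abs,
      abs_of_nonneg (by positivity)]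
    rw [inv_lt_one_iff₀]; right; linarith
  obtain ⟨hsummable, hhasSum⟩ :=
    EulerProduct.summable_and_hasSum_smoothNumbers_prod_primesBelow_geometric
      (f := invHom) hnorm N
  set P : ℝ := ∏ p ∈ N.primesBelow, (1 - invHom p)⁻¹ with hP
  -- log z ≤ P
  have hharm : Real.log z ≤ (harmonic ⌊z⌋₊ : ℝ) := log_le_harmonic_floor z (by linarith)
  have hHP : (harmonic ⌊z⌋₊ : ℝ) ≤ P := by
    have hsum' : Summable (fun m : N.smoothNumbers ↦ (m : ℝ)⁻¹) :=
      hhasSum.summable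
    have hind : Summable ((N.smoothNumbers : Set ℕ).indicator (fun m : ℕ ↦ (m : ℝ)⁻¹)) := by
      rw [← summable_subtype_iff_indicator]; exact hsum'
    have htsum : ∑' m : ℕ, (N.smoothNumbers : Set ℕ).indicator (fun m : ℕ ↦ (m : ℝ)⁻¹) m = P := by
      rw [← _root_.tsum_subtype]; exact hhasSum.tsum_eq
    have hbound : ∑ i ∈ Finset.Icc 1 ⌊z⌋₊, (i : ℝ)⁻¹
        ≤ ∑' m : ℕ, (N.smoothNumbers : Set ℕ).indicator (fun m : ℕ ↦ (m : ℝ)⁻¹) m := by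
      have heq : ∀ i ∈ Finset.Icc 1 ⌊z⌋₊,
          (i : ℝ)⁻¹ = (N.smoothNumbers : Set ℕ).indicator (fun m : ℕ ↦ (m : ℝ)⁻¹) i := by
        intro i hi
        rw [Finset.mem_Icc] at hi
        rw [Set.indicator_of_mem]
        exact Nat.mem_smoothNumbers_of_lt hi.1 (by omega)
      rw [Finset.sum_congr rfl heq]
      refine Summable.sum_le_tsum _ (fun i _ ↦ ?_) hind
      exact Set.indicator_nonneg (fun m _ ↦ by positivity) i
    calc (harmonic ⌊z⌋₊ : ℝ) = ∑ i ∈ Finset.Icc 1 ⌊z⌋₊, (i : ℝ)⁻¹ := by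
          rw [harmonic_eq_sum_Icc]; push_cast; rfl
      _ ≤ _ := hbound
      _ = P := htsum
  have hlogz : 0 < Real.log z := Real.log_pos (by linarith)
  have hzP : Real.log z ≤ P := hharm.trans hHP
  have h1 : Real.log (Real.log z) ≤ Real.log P := Real.log_le_log hlogz hzP
  -- log P = sum of logs
  have hterm_pos : ∀ p ∈ N.primesBelow, (0 : ℝ) < (1 - invHom p)⁻¹ := by
    intro p hp
    have h2p : (2 : ℝ) ≤ p := by exact_mod_cast (Nat.prime_of_mem_primesBelow hp).two_le
    have : invHom p = (p : ℝ)⁻¹ := rfl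
    rw [this]
    have h' : (p:ℝ)⁻¹ ≤ 1/2 := by rw [inv_le_iff_one_le_mul₀ (by linarith)]; nlinarith
    have : (0:ℝ) < 1 - (p:ℝ)⁻¹ := by linarith
    exact inv_pos.mpr this
  have hlogP : Real.log P = ∑ p ∈ N.primesBelow, Real.log (1 - invHom p)⁻¹ := by
    rw [hP, Real.log_prod]
    exact fun p hp ↦ (hterm_pos p hp).ne'
  -- each log term ≤ 1/p + 2/p²
  have hterm : ∀ p ∈ N.primesBelow,
      Real.log (1 - invHom p)⁻¹ ≤ (1 : ℝ) / p + 2 * ((p : ℝ) ^ 2)⁻¹ := by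
    intro p hp
    have h2p : (2 : ℝ) ≤ p := by exact_mod_cast (Nat.prime_of_mem_primesBelow hp).two_le
    have hlt : (0 : ℝ) < 1 - (p : ℝ)⁻¹ := by
      have : (p:ℝ)⁻¹ ≤ 1/2 := by rw [inv_le_iff_one_le_mul₀ (by linarith)]; nlinarith
      linarith
    have hle := Real.log_le_sub_one_of_pos (hterm_pos p hp)
    have : invHom p = (p : ℝ)⁻¹ := rfl
    rw [this] at hle ⊢
    have hpne : (p : ℝ) ≠ 0 := by linarith
    have hp1 : (0:ℝ) < (p : ℝ) - 1 := by linarith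
    have key : (1 - (p : ℝ)⁻¹)⁻¹ - 1 ≤ (1 : ℝ) / p + 2 * ((p : ℝ) ^ 2)⁻¹ := by
      have e1 : (1 - (p : ℝ)⁻¹) = ((p:ℝ)-1)/p := by field_simp
      have e2 : (1 - (p : ℝ)⁻¹)⁻¹ - 1 = 1/((p:ℝ)-1) := by
        rw [e1, inv_div]; field_simp; ring
      rw [e2, show (2:ℝ) * ((p : ℝ) ^ 2)⁻¹ = 2 / (p:ℝ)^2 from (div_eq_mul_inv 2 _).symm,
        div_add_div _ _ (by positivity) (by positivity),
        div_le_div_iff₀ hp1 (by positivity)]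
      nlinarith [sq_nonneg (p:ℝ)]
    linarith
  have hsum2 : ∑ p ∈ N.primesBelow, 2 * ((p : ℝ) ^ 2)⁻¹
      ≤ 2 * ∑' n : ℕ, ((n : ℝ) ^ 2)⁻¹ := by
    rw [← Finset.mul_sum]
    have hs : Summable (fun n : ℕ ↦ ((n : ℝ) ^ 2)⁻¹) := by
      have := Real.summable_one_div_nat_pow (p := 2).mpr one_lt_two
      simpa [one_div] using this
    have := Summable.sum_le_tsum N.primesBelow (fun i _ ↦ by positivity) hs
    linarith
  calc Real.log (Real.log z) - 2 * ∑' n : ℕ, ((n : ℝ) ^ 2)⁻¹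
      ≤ Real.log P - 2 * ∑' n : ℕ, ((n : ℝ) ^ 2)⁻¹ := by linarith
    _ ≤ (∑ p ∈ N.primesBelow, ((1 : ℝ) / p + 2 * ((p : ℝ) ^ 2)⁻¹))
        - 2 * ∑' n : ℕ, ((n : ℝ) ^ 2)⁻¹ := by
        rw [hlogP]; gcongr with p hp; exact hterm p hp
    _ ≤ ∑ p ∈ N.primesBelow, (1 : ℝ) / p := by
        rw [Finset.sum_add_distrib]; linarith

theorem stmt7 (lam : ℕ → ℝ) (C : ℝ)
    (h2 : ∀ z : ℝ, 2 ≤ z → |∑ p ∈ (⌊z⌋₊ + 1).primesBelow, (lam p ^ 2 - 1) / p| ≤ C)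
    (h4 : ∀ z : ℝ, 2 ≤ z → |∑ p ∈ (⌊z⌋₊ + 1).primesBelow, (lam p ^ 4 - 2) / p| ≤ C)
    (h6 : ∀ z : ℝ, 2 ≤ z → |∑ p ∈ (⌊z⌋₊ + 1).primesBelow, (lam p ^ 6 - 5) / p| ≤ C) :
    ∃ C' : ℝ, ∀ z : ℝ, 2 ≤ z →
      (1/6) * Real.log (Real.log z) - C'
        ≤ ∑ p ∈ (⌊z⌋₊ + 1).primesBelow, (1 - |lam p|)^2 / p := by
  set K : ℝ := 2 * ∑' n : ℕ, ((n : ℝ) ^ 2)⁻¹ with hK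
  refine ⟨(1/6) * K + (19/18) * C, fun z hz ↦ ?_⟩
  set S := (⌊z⌋₊ + 1).primesBelow with hS
  have hM := mertens_lower z hz
  have hpt : ∀ p ∈ S,
      (1/6) * ((1:ℝ)/p) - (11/18) * ((lam p ^ 2 - 1)/p) + (7/18) * ((lam p ^ 4 - 2)/p)
        - (1/18) * ((lam p ^ 6 - 5)/p) ≤ (1 - |lam p|)^2 / p := by
    intro p hp
    have hppos : (0 : ℝ) < p := by
      exact_mod_cast (Nat.prime_of_mem_primesBelow hp).pos
    set t : ℝ := |lam p| with ht
    have ht0 : 0 ≤ t := abs_nonneg _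
    have ht2 : t ^ 2 = lam p ^ 2 := by rw [ht, sq_abs]
    have ht4 : t ^ 4 = lam p ^ 4 := by
      rw [ht, ← abs_pow, abs_of_nonneg (by positivity)]
    have ht6 : t ^ 6 = lam p ^ 6 := by
      rw [ht, ← abs_pow, abs_of_nonneg (by positivity)]
    have key : (1/6 : ℝ) - (11/18) * (lam p ^ 2 - 1) + (7/18) * (lam p ^ 4 - 2)
        - (1/18) * (lam p ^ 6 - 5) ≤ (1 - t)^2 := by
      rw [← ht2, ← ht4, ← ht6]
      nlinarith [sq_nonneg ((t - 1) * (t^2 + t - 3)), sq_nonneg ((t - 1) * (t - 2))]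
    calc (1/6) * ((1:ℝ)/p) - (11/18) * ((lam p ^ 2 - 1)/p) + (7/18) * ((lam p ^ 4 - 2)/p)
          - (1/18) * ((lam p ^ 6 - 5)/p)
        = ((1/6 : ℝ) - (11/18) * (lam p ^ 2 - 1) + (7/18) * (lam p ^ 4 - 2)
            - (1/18) * (lam p ^ 6 - 5)) / p := by ring
      _ ≤ (1 - t)^2 / p := by
          gcongr
      _ = (1 - |lam p|)^2 / p := rfl
  have hsum := Finset.sum_le_sum hpt
  have hexp : ∑ p ∈ S, ((1/6) * ((1:ℝ)/p) - (11/18) * ((lam p ^ 2 - 1)/p)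
        + (7/18) * ((lam p ^ 4 - 2)/p) - (1/18) * ((lam p ^ 6 - 5)/p))
      = (1/6) * (∑ p ∈ S, (1:ℝ)/p) - (11/18) * (∑ p ∈ S, (lam p ^ 2 - 1)/p)
        + (7/18) * (∑ p ∈ S, (lam p ^ 4 - 2)/p)
        - (1/18) * (∑ p ∈ S, (lam p ^ 6 - 5)/p) := by
    simp only [Finset.sum_sub_distrib, Finset.sum_add_distrib, Finset.mul_sum]
  rw [hexp] at hsum
  have hb2 := abs_le.mp (h2 z hz)
  have hb4 := abs_le.mp (h4 z hz)
  have hb6 := abs_le.mp (h6 z hz)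
  rw [← hS] at hb2 hb4 hb6
  linarith [hsum, hM, hb2.1, hb2.2, hb4.1, hb4.2, hb6.1, hb6.2]
end

section
/- For real r ≥ 1 and real y > 0, the modified Bessel function of imaginary order satisfies |K_{ir}(y)| ≤ C · |Γ(1/2 + ir)| · (1 + r²)/y² for an absolute constant C. -/
/-- The modified Bessel function of the second kind of purely imaginary order `i r`,
via the classical integral representation `K_{ir}(y) = ∫₀^∞ e^{-y cosh t} cos(r t) dt`. -/
noncomputable def besselKi (r : ℝ) (y : ℝ) : ℝ :=
  ∫ t in Set.Ioi (0:ℝ), Real.exp (-y * Real.cosh t) * Real.cos (r * t)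

set_option maxHeartbeats 1000000

section BesselAux
open Complex Real Set MeasureTheory Filter

noncomputable def ff (r y : ℝ) (z : ℂ) : ℂ := Complex.exp (-(y:ℂ) * Complex.cosh z + Complex.I * r * z)

lemma ff_diff (r y : ℝ) : Differentiable ℂ (ff r y) := by
  unfold ff
  fun_prop

lemma ff_cont_line (r y b : ℝ) : Continuous (fun x : ℝ => ff r y ((x:ℂ) + b*Complex.I)) := by
  apply (ff_diff r y).continuous.comp
  fun_prop

lemma cosh_lower' (x : ℝ) : 1 + x^2/2 ≤ Real.cosh x := by
  have h1 : Real.cosh x = Real.cosh (2 * (x/2)) := by ring_nf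
  have h2 := Real.cosh_two_mul (x/2)
  have h3 := Real.cosh_sq (x/2)
  have h4 : |x|/2 ≤ Real.sinh (|x|/2) := Real.self_le_sinh_iff.2 (by positivity)
  have h5 : Real.sinh (x/2)^2 = Real.sinh (|x|/2)^2 := by
    rcases abs_cases x with ⟨h,_⟩|⟨h,_⟩ <;> rw [h] <;> ring_nf <;> simp [Real.sinh_neg, neg_div]
  nlinarith [_root_.sq_abs x, abs_nonneg x]

lemma cosh_re'' (x b : ℝ) : (Complex.cosh ((x:ℂ) + b*Complex.I)).re = Real.cosh x * Real.cos b := by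
  simp [Complex.cosh_add, Complex.cosh_mul_I, Complex.sinh_mul_I, Complex.cosh_ofReal_re,
    Complex.sinh_ofReal_re, Complex.cos_ofReal_re]

lemma norm_ff (r y x b : ℝ) :
    ‖ff r y ((x:ℂ) + b*Complex.I)‖ = Real.exp (-(y * (Real.cosh x * Real.cos b)) - r*b) := by
  rw [ff, Complex.norm_exp]
  congr 1
  simp [cosh_re'']
  ring_nf

lemma tendsto_vert (r y b : ℝ) (hr : 0 ≤ r) (hy : 0 < y) (hb : 0 ≤ b) (hb2 : b < π/2) :
    Tendsto (fun T : ℝ => Complex.I • ∫ s in (0:ℝ)..b, ff r y ((T:ℂ) + s*Complex.I))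
      atTop (nhds 0) := by
  have hcb : 0 < Real.cos b := Real.cos_pos_of_mem_Ioo ⟨by linarith [Real.pi_pos], hb2⟩
  refine squeeze_zero_norm (a := fun T : ℝ => Real.exp (-(y * Real.cos b) * Real.cosh T) * b)
    (fun T => ?_) ?_
  · 
    rw [norm_smul, Complex.norm_I, one_mul]
    have := intervalIntegral.norm_integral_le_of_norm_le_const
      (C := Real.exp (-(y * Real.cos b) * Real.cosh T))
      (f := fun s : ℝ => ff r y ((T:ℂ) + s*Complex.I)) (a := 0) (b := b) ?_
    · calc ‖∫ s in (0:ℝ)..b, ff r y ((T:ℂ) + s*Complex.I)‖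
          ≤ Real.exp (-(y * Real.cos b) * Real.cosh T) * |b - 0| := this
        _ = Real.exp (-(y * Real.cos b) * Real.cosh T) * b := by rw [sub_zero, _root_.abs_of_nonneg hb]
    · intro s hs
      rw [Set.uIoc_of_le hb] at hs
      rw [norm_ff]
      apply Real.exp_le_exp.2
      have hs1 : 0 < s := hs.1
      have hs2 : s ≤ b := hs.2
      have hcos : Real.cos b ≤ Real.cos s :=
        Real.cos_le_cos_of_nonneg_of_le_pi hs1.le (by linarith [Real.pi_pos]) hs2
      have hch : 0 < Real.cosh T := Real.cosh_pos T
      nlinarith [mul_nonneg hr hs1.le, mul_le_mul_of_nonneg_left hcos (mul_pos hy hch).le]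
  · have h1 : Tendsto (fun T : ℝ => Real.cosh T) atTop atTop := by
      apply tendsto_atTop_mono (fun x => ?_) tendsto_id
      show id x ≤ Real.cosh x
      simp only [id]
      nlinarith [cosh_lower' x]
    have hcb : 0 < Real.cos b := Real.cos_pos_of_mem_Ioo ⟨by linarith [Real.pi_pos], hb2⟩
    have h2 : Tendsto (fun T : ℝ => -(y * Real.cos b) * Real.cosh T) atTop atBot :=
      h1.const_mul_atTop_of_neg (by nlinarith)
    have h3 : Tendsto (fun T : ℝ => Real.exp (-(y * Real.cos b) * Real.cosh T)) atTop (nhds 0) :=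
      Real.tendsto_exp_atBot.comp h2
    have h4 := h3.mul_const b
    simpa using h4

lemma integrableOn_exp_neg_cosh' {c : ℝ} (hc : 0 < c) :
    IntegrableOn (fun x => Real.exp (-(c * Real.cosh x))) (Ioi 0) := by
  have hg : IntegrableOn (fun x => Real.exp (-c) * Real.exp (-(c/2) * x^2)) (Ioi 0) :=
    ((integrable_exp_neg_mul_sq (by positivity : (0:ℝ) < c/2)).const_mul _).integrableOn
  refine hg.mono' ?_ ?_
  · exact (Real.continuous_exp.comp (by continuity)).aestronglyMeasurable
  · filter_upwards with x
    rw [Real.norm_eq_abs, Real.abs_exp, ← Real.exp_add]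
    apply Real.exp_le_exp.2
    nlinarith [cosh_lower' x]

lemma integrable_ff_horiz (r y b : ℝ) (hr : 0 ≤ r) (hy : 0 < y) (hb : 0 ≤ b) (hb2 : b < π/2) :
    IntegrableOn (fun x : ℝ => ff r y ((x:ℂ) + b*Complex.I)) (Ioi 0) := by
  have hcb : 0 < Real.cos b := Real.cos_pos_of_mem_Ioo ⟨by linarith [Real.pi_pos], hb2⟩
  have hc : 0 < y * Real.cos b := mul_pos hy hcb
  refine (integrableOn_exp_neg_cosh' hc).mono' ((ff_cont_line r y b).aestronglyMeasurable) ?_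
  filter_upwards with x
  rw [norm_ff]
  apply Real.exp_le_exp.2
  nlinarith [mul_nonneg hr hb]

lemma contour (r y b : ℝ) (hr : 0 ≤ r) (hy : 0 < y) (hb : 0 ≤ b) (hb2 : b < π/2) :
    (∫ x in Ioi (0:ℝ), ff r y x)
      = (∫ x in Ioi (0:ℝ), ff r y ((x:ℂ) + b*Complex.I))
        + Complex.I • ∫ s in (0:ℝ)..b, ff r y ((s:ℝ)*Complex.I) := by
  have hrect : ∀ T : ℝ, (∫ x in (0:ℝ)..T, ff r y x)
      = (∫ x in (0:ℝ)..T, ff r y ((x:ℂ) + b*Complex.I))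
        - Complex.I • (∫ s in (0:ℝ)..b, ff r y ((T:ℂ) + s*Complex.I))
        + Complex.I • ∫ s in (0:ℝ)..b, ff r y ((s:ℝ)*Complex.I) := by
    intro T
    have h := Complex.integral_boundary_rect_eq_zero_of_differentiableOn (ff r y) 0
      ((T:ℂ) + b*Complex.I) ((ff_diff r y).differentiableOn)
    have hre : ((T:ℂ) + b*Complex.I).re = T := by simp
    have him : ((T:ℂ) + b*Complex.I).im = b := by simp
    rw [hre, him] at h
    simp only [Complex.zero_re, Complex.zero_im, Complex.ofReal_zero, zero_mul, add_zero, zero_add] at h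
    simp only [smul_eq_mul] at h ⊢
    linear_combination h
  -- now take T → ∞
  have t1 : Tendsto (fun T : ℝ => ∫ x in (0:ℝ)..T, ff r y x) atTop
      (nhds (∫ x in Ioi (0:ℝ), ff r y x)) := by
    apply intervalIntegral_tendsto_integral_Ioi 0 ?_ tendsto_id
    have := integrable_ff_horiz r y 0 hr hy le_rfl (by positivity)
    simpa using this
  have t2 : Tendsto (fun T : ℝ => ∫ x in (0:ℝ)..T, ff r y ((x:ℂ) + b*Complex.I)) atTop
      (nhds (∫ x in Ioi (0:ℝ), ff r y ((x:ℂ) + b*Complex.I))) :=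
    intervalIntegral_tendsto_integral_Ioi 0 (integrable_ff_horiz r y b hr hy hb hb2) tendsto_id
  have t3 := tendsto_vert r y b hr hy hb hb2
  have t4 : Tendsto (fun T : ℝ => ∫ x in (0:ℝ)..T, ff r y x) atTop
      (nhds ((∫ x in Ioi (0:ℝ), ff r y ((x:ℂ) + b*Complex.I)) - 0
        + Complex.I • ∫ s in (0:ℝ)..b, ff r y ((s:ℝ)*Complex.I))) := by
    apply Tendsto.congr (fun T => (hrect T).symm)
    exact Tendsto.add (t2.sub t3) tendsto_const_nhds
  have := tendsto_nhds_unique t1 t4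
  rw [this, sub_zero]

lemma ff_re (r y t : ℝ) : (ff r y ((t:ℝ):ℂ)).re = Real.exp (-y * Real.cosh t) * Real.cos (r * t) := by
  rw [ff, Complex.exp_re]
  congr 2
  · simp
  · simp

lemma ff_vert_real (r y s : ℝ) :
    ff r y ((s:ℝ)*Complex.I) = ((Real.exp (-(y * Real.cos s) - r*s) : ℝ) : ℂ) := by
  rw [ff]
  have harg : -(y:ℂ) * Complex.cosh ((s:ℝ)*Complex.I) + Complex.I*r*((s:ℝ)*Complex.I)
      = ((-(y * Real.cos s) - r*s : ℝ) : ℂ) := by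
    rw [Complex.cosh_mul_I, ← Complex.ofReal_cos]
    push_cast
    linear_combination (↑r * ↑s : ℂ) * Complex.I_sq
  rw [harg, Complex.ofReal_exp]

lemma besselKi_re (r y b : ℝ) (hr : 0 ≤ r) (hy : 0 < y) (hb : 0 ≤ b) (hb2 : b < π/2) :
    besselKi r y = (∫ x in Ioi (0:ℝ), ff r y ((x:ℂ) + b*Complex.I)).re := by
  have hint : IntegrableOn (fun x : ℝ => ff r y ((x:ℝ):ℂ)) (Ioi 0) := by
    simpa using integrable_ff_horiz r y 0 hr hy le_rfl (by positivity)
  have h1 : besselKi r y = (∫ x in Ioi (0:ℝ), ff r y ((x:ℝ):ℂ)).re := by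
    rw [besselKi]
    rw [show (∫ x in Ioi (0:ℝ), ff r y ((x:ℝ):ℂ)).re
      = ∫ x in Ioi (0:ℝ), (ff r y ((x:ℝ):ℂ)).re from (integral_re hint).symm]
    exact setIntegral_congr_fun measurableSet_Ioi (fun t _ => (ff_re r y t).symm)
  rw [h1, contour r y b hr hy hb hb2]
  have hL : (∫ s in (0:ℝ)..b, ff r y ((s:ℝ)*Complex.I))
      = ((∫ s in (0:ℝ)..b, Real.exp (-(y * Real.cos s) - r*s) : ℝ) : ℂ) := by
    rw [← intervalIntegral.integral_ofReal]
    exact intervalIntegral.integral_congr (fun s _ => ff_vert_real r y s)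
  rw [hL]
  simp [Complex.add_re, Complex.smul_re]

lemma integral_exp_neg_cosh_le' {c : ℝ} (hc : 0 < c) :
    ∫ x in Ioi 0, Real.exp (-(c * Real.cosh x)) ≤ Real.exp (-c) * (2 / Real.sqrt c) := by
  have h1 : ∫ x in Ioi 0, Real.exp (-c) * Real.exp (-(c/2) * x^2)
      = Real.exp (-c) * (Real.sqrt (π / (c/2)) / 2) := by
    rw [MeasureTheory.integral_const_mul, integral_gaussian_Ioi]
  have h2 : (∫ x in Ioi 0, Real.exp (-(c * Real.cosh x)))
      ≤ ∫ x in Ioi 0, Real.exp (-c) * Real.exp (-(c/2) * x^2) := by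
    refine setIntegral_mono_on (integrableOn_exp_neg_cosh' hc) ?_ measurableSet_Ioi ?_
    · exact ((integrable_exp_neg_mul_sq (by positivity : (0:ℝ) < c/2)).const_mul _).integrableOn
    · intro x _
      rw [← Real.exp_add]
      apply Real.exp_le_exp.2
      nlinarith [cosh_lower' x]
  rw [h1] at h2
  refine h2.trans ?_
  have h16 : Real.sqrt (16/c) = 4 / Real.sqrt c := by
    rw [Real.sqrt_div (by norm_num : (0:ℝ) ≤ 16) c, show Real.sqrt 16 = 4 by
      rw [show (16:ℝ) = 4^2 by norm_num, Real.sqrt_sq (by norm_num : (0:ℝ) ≤ 4)]]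
  have hle : Real.sqrt (π / (c/2)) ≤ Real.sqrt (16/c) := by
    apply Real.sqrt_le_sqrt
    rw [div_le_div_iff₀ (by positivity) hc]
    nlinarith [Real.pi_le_four]
  rw [h16] at hle
  have heq : (4 / Real.sqrt c)/2 = 2/Real.sqrt c := by ring
  have h4 : Real.sqrt (π/(c/2))/2 ≤ 2/Real.sqrt c := by linarith
  exact mul_le_mul_of_nonneg_left h4 (Real.exp_nonneg _)

lemma master (r y b : ℝ) (hr : 0 ≤ r) (hy : 0 < y) (hb : 0 ≤ b) (hb2 : b < π/2) :
    |besselKi r y| ≤ Real.exp (-(r*b)) *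
      (Real.exp (-(y * Real.cos b)) * (2 / Real.sqrt (y * Real.cos b))) := by
  have hcb : 0 < Real.cos b := Real.cos_pos_of_mem_Ioo ⟨by linarith [Real.pi_pos], hb2⟩
  have hc : 0 < y * Real.cos b := mul_pos hy hcb
  rw [besselKi_re r y b hr hy hb hb2]
  calc |(∫ x in Ioi (0:ℝ), ff r y ((x:ℂ) + b*Complex.I)).re|
      ≤ ‖∫ x in Ioi (0:ℝ), ff r y ((x:ℂ) + b*Complex.I)‖ := Complex.abs_re_le_norm _
    _ ≤ ∫ x in Ioi (0:ℝ), ‖ff r y ((x:ℂ) + b*Complex.I)‖ := norm_integral_le_integral_norm _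
    _ = ∫ x in Ioi (0:ℝ), Real.exp (-(r*b)) * Real.exp (-((y * Real.cos b) * Real.cosh x)) := by
        refine setIntegral_congr_fun measurableSet_Ioi (fun x _ => ?_)
        rw [norm_ff, ← Real.exp_add]
        congr 1
        ring
    _ = Real.exp (-(r*b)) * ∫ x in Ioi (0:ℝ), Real.exp (-((y * Real.cos b) * Real.cosh x)) :=
        MeasureTheory.integral_const_mul _ _
    _ ≤ Real.exp (-(r*b)) * (Real.exp (-(y * Real.cos b)) * (2 / Real.sqrt (y * Real.cos b))) :=
        mul_le_mul_of_nonneg_left (integral_exp_neg_cosh_le' hc) (Real.exp_nonneg _)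

lemma gamma_lower (r : ℝ) (hr : 0 ≤ r) :
    Real.exp (-(π*r/2)) ≤ ‖Complex.Gamma (1/2 + r*Complex.I)‖ := by
  set z : ℂ := 1/2 + r*Complex.I with hz
  have hconj : (starRingEnd ℂ) z = 1 - z := by
    simp only [hz]
    rw [Complex.ext_iff]
    constructor <;> simp <;> norm_num
  have h2 : Complex.Gamma (1 - z) = (starRingEnd ℂ) (Complex.Gamma z) := by
    rw [← hconj, Complex.Gamma_conj]
  have h3 : Complex.sin (π * z) = ((Real.cosh (π*r) : ℝ) : ℂ) := by
    have : (π : ℂ) * z = π/2 + ((π*r : ℝ) : ℂ) * Complex.I := by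
      push_cast [hz]; ring
    rw [this, Complex.sin_add, Complex.sin_pi_div_two, Complex.cos_pi_div_two,
      Complex.cos_mul_I, Complex.ofReal_cosh]
    ring
  have h1 := Complex.Gamma_mul_Gamma_one_sub z
  rw [h2, h3, Complex.mul_conj] at h1
  have h4 : Complex.normSq (Complex.Gamma z) = π / Real.cosh (π*r) := by
    have := h1
    rw [show ((π:ℝ):ℂ) / ((Real.cosh (π*r) : ℝ) : ℂ) = ((π / Real.cosh (π*r) : ℝ) : ℂ) by
      push_cast; ring] at this
    exact_mod_cast this
  have h5 : ‖Complex.Gamma z‖^2 = π / Real.cosh (π*r) := by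
    rw [Complex.sq_norm, h4]
  have hchpos : 0 < Real.cosh (π*r) := Real.cosh_pos _
  have h6 : Real.exp (-(π*r)) ≤ π / Real.cosh (π*r) := by
    rw [le_div_iff₀ hchpos, Real.cosh_eq]
    have e1 : Real.exp (π*r) * Real.exp (-(π*r)) = 1 := by
      rw [← Real.exp_add]; simp
    have e2 : Real.exp (-(π*r)) ≤ 1 := Real.exp_le_one_iff.2 (by nlinarith [Real.pi_pos])
    nlinarith [Real.exp_pos (-(π*r)), Real.pi_gt_three, Real.exp_pos (π*r)]
  have h7 : Real.exp (-(π*r/2))^2 = Real.exp (-(π*r)) := by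
    rw [sq, ← Real.exp_add]; ring_nf
  nlinarith [Real.exp_pos (-(π*r/2)), norm_nonneg (Complex.Gamma z), h5, h6, h7]

lemma expbound (r y : ℝ) (hr : 1 ≤ r) (hy : 0 < y) :
    |besselKi r y| ≤ 300 * Real.exp (-(π*r/2)) * (1+r^2) / y^2 := by
  have hr0 : 0 < r := by linarith
  have hy2 : (0:ℝ) < y^2 := by positivity
  rcases le_or_gt y (2*r) with hcase | hcase
  · -- oscillatory case : b = π/2 - 1/r
    have hu1 : 0 < 1/r := by positivity
    have hu2 : 1/r ≤ 1 := by rw [div_le_one hr0]; exact hr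
    have hpi : 3 < π := Real.pi_gt_three
    have hb : 0 ≤ π/2 - 1/r := by linarith
    have hb2 : π/2 - 1/r < π/2 := by linarith
    have hM := master r y (π/2 - 1/r) (by linarith) hy hb hb2
    rw [Real.cos_pi_div_two_sub] at hM
    have hsin : 3/(4*r) ≤ Real.sin (1/r) := by
      have h := Real.sin_gt_sub_cube hu1
      have hsq1 : (1/r)*(1/r) ≤ 1 :=
        mul_le_one₀ hu2 hu1.le hu2
      have hcub : (1/r)^3 ≤ 1/r := by nlinarith [hu1]
      have heq34 : 3/(4*r) = (3/4)*(1/r) := by ring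
      have : 3/(4*r) ≤ 1/r - (1/r)^3/4 := by rw [heq34]; linarith
      linarith
    have hsinpos : 0 < Real.sin (1/r) := lt_of_lt_of_le (by positivity) hsin
    have hcpos : 0 < y * Real.sin (1/r) := mul_pos hy hsinpos
    have hexp1 : Real.exp (-(r * (π/2 - 1/r))) = Real.exp 1 * Real.exp (-(π*r/2)) := by
      rw [← Real.exp_add]
      congr 1
      field_simp
      ring
    have he3 : Real.exp 1 ≤ 3 := by nlinarith [Real.exp_one_lt_d9]
    set s := Real.sqrt (3*y/(4*r)) with hs
    have hs0 : 0 < s := Real.sqrt_pos.2 (by positivity)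
    have hs2 : s^2 = 3*y/(4*r) := Real.sq_sqrt (by positivity)
    have hsqrtmono : s ≤ Real.sqrt (y * Real.sin (1/r)) := by
      apply Real.sqrt_le_sqrt
      rw [div_le_iff₀ (by positivity : (0:ℝ) < 4*r)]
      have h1 := mul_le_mul_of_nonneg_left hsin (by positivity : (0:ℝ) ≤ 4*r*y)
      have h2 : (4*r*y)*(3/(4*r)) = 3*y := by field_simp
      nlinarith
    have hsygt : 0 < Real.sqrt (y * Real.sin (1/r)) := Real.sqrt_pos.2 hcpos
    have hfr : 2 / Real.sqrt (y * Real.sin (1/r)) ≤ 2 / s := by gcongr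
    have hexpy : Real.exp (-(y * Real.sin (1/r))) ≤ 1 :=
      Real.exp_le_one_iff.2 (by nlinarith)
    have hepos := Real.exp_pos (-(π*r/2))
    have hbig : |besselKi r y| ≤ 3 * Real.exp (-(π*r/2)) * (2/s) := by
      refine hM.trans ?_
      rw [hexp1]
      have hstep1 : Real.exp (-(y * Real.sin (1/r))) * (2 / Real.sqrt (y * Real.sin (1/r)))
          ≤ 1 * (2/s) :=
        mul_le_mul hexpy hfr (by positivity) (by norm_num)
      calc Real.exp 1 * Real.exp (-(π*r/2))
            * (Real.exp (-(y * Real.sin (1/r))) * (2 / Real.sqrt (y * Real.sin (1/r))))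
          ≤ 3 * Real.exp (-(π*r/2)) * (1 * (2/s)) := by
            apply mul_le_mul ?_ hstep1 (by positivity) (by positivity)
            exact mul_le_mul_of_nonneg_right he3 hepos.le
        _ = 3 * Real.exp (-(π*r/2)) * (2/s) := by ring
    refine hbig.trans ?_
    have hBsq : (100*(1+r^2)*s)^2 = 7500*(1+r^2)^2*y/r := by
      rw [mul_pow, mul_pow, hs2]
      field_simp
      ring
    have hy3 : y^3 ≤ 8*r^3 := by
      have := pow_le_pow_left₀ hy.le hcase 3
      nlinarith [this]
    have hAB : (2*y^2)^2 ≤ (100*(1+r^2)*s)^2 := by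
      rw [hBsq, le_div_iff₀ hr0]
      nlinarith [mul_le_mul_of_nonneg_left hy3 (by positivity : (0:ℝ) ≤ 4*y*r), hy.le,
        mul_nonneg hy.le (sq_nonneg (1+r^2)), sq_nonneg r, hr0.le]
    have hABle : 2*y^2 ≤ 100*(1+r^2)*s := by
      have h' := Real.sqrt_le_sqrt hAB
      rwa [Real.sqrt_sq (by positivity), Real.sqrt_sq (by positivity)] at h'
    have key : 2/s ≤ 100*(1+r^2)/y^2 := by
      rw [div_le_div_iff₀ hs0 hy2]
      linarith
    calc 3 * Real.exp (-(π*r/2)) * (2/s)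
        ≤ 3 * Real.exp (-(π*r/2)) * (100*(1+r^2)/y^2) :=
          mul_le_mul_of_nonneg_left key (by positivity)
      _ = 300 * Real.exp (-(π*r/2)) * (1+r^2) / y^2 := by ring
  · -- decay case : b = 0
    have hM := master r y 0 (by linarith) hy le_rfl (by positivity)
    simp only [mul_zero, neg_zero, Real.exp_zero, one_mul, Real.cos_zero, mul_one] at hM
    have hy2' : 2 < y := by linarith
    have hsq : (1:ℝ) ≤ Real.sqrt y := Real.one_le_sqrt.2 (by linarith)
    have h1 : 2 / Real.sqrt y ≤ 2 := by
      rw [div_le_iff₀ (by linarith)]; nlinarith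
    have h2 : |besselKi r y| ≤ 2 * Real.exp (-y) := by
      have := mul_le_mul_of_nonneg_left h1 (Real.exp_nonneg (-y))
      linarith [hM]
    refine h2.trans ?_
    rw [le_div_iff₀ hy2]
    have hsplit : Real.exp (-y) = Real.exp (-(π*r/2)) * Real.exp (π*r/2 - y) := by
      rw [← Real.exp_add]; ring_nf
    have hfrac : Real.exp (π*r/2 - y) ≤ Real.exp (-(y/5)) := by
      apply Real.exp_le_exp.2
      nlinarith [Real.pi_lt_d2]
    have hy5 : y^2 * Real.exp (-(y/5)) ≤ 100 := by
      have hu := Real.add_one_le_exp (y/10)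
      have hsq5 : Real.exp (y/5) = Real.exp (y/10) * Real.exp (y/10) := by
        rw [← Real.exp_add]; ring_nf
      have hinv : Real.exp (-(y/5)) * Real.exp (y/5) = 1 := by
        rw [← Real.exp_add]; simp
      nlinarith [Real.exp_pos (y/10), Real.exp_pos (-(y/5)), hy.le,
        mul_le_mul hu hu (by positivity) (Real.exp_pos (y/10)).le]
    have hepos := Real.exp_pos (-(π*r/2))
    have hr2 : (1:ℝ) ≤ 1 + r^2 := by nlinarith
    calc 2 * Real.exp (-y) * y^2
        = Real.exp (-(π*r/2)) * (2 * y^2 * Real.exp (π*r/2 - y)) := by rw [hsplit]; ring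
      _ ≤ Real.exp (-(π*r/2)) * (2 * y^2 * Real.exp (-(y/5))) := by
          apply mul_le_mul_of_nonneg_left ?_ hepos.le
          apply mul_le_mul_of_nonneg_left hfrac (by positivity)
      _ ≤ Real.exp (-(π*r/2)) * 200 := by nlinarith
      _ ≤ 300 * Real.exp (-(π*r/2)) * (1+r^2) := by nlinarith


theorem stmt11 :
    ∃ C > 0, ∀ r : ℝ, 1 ≤ r → ∀ y : ℝ, 0 < y →
      |besselKi r y| ≤ C * ‖Complex.Gamma (1/2 + r * Complex.I)‖ * (1 + r^2) / y^2 := by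
  refine ⟨300, by norm_num, fun r hr y hy => ?_⟩
  refine (expbound r y hr hy).trans ?_
  have hΓ := gamma_lower r (by linarith)
  have hy2 : (0:ℝ) < y^2 := by positivity
  gcongr

end BesselAux
end

section
/- For z ≥ 2 and real numbers λ(p) indexed by primes with ∑_{p ≤ z} (λ(p)² − 1)/p = O(1), the product ∏_{p ≤ z} (1 + |λ(p)|/p)² (1 − λ(p)²/p) (1 − 1/p), with each factor assumed positive, is ≪ ∏_{p ≤ z} (1 − (1 − |λ(p)|)²/p). -/
lemma key18 (x t : ℝ) (hx : 0 < x) (hx2 : x ≤ 1/2) (ht : 0 ≤ t) (h : t^2*x < 1) :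
    (1 + t*x)^2 * (1 - t^2*x) * (1 - x) ≤ 1 - (1-t)^2*x := by
  nlinarith [sq_nonneg (t*x), sq_nonneg t, sq_nonneg (1-t), sq_nonneg x,
    mul_nonneg (mul_nonneg hx.le hx.le) (mul_nonneg ht ht),
    mul_nonneg hx.le ht, sq_nonneg (t-1), sq_nonneg (t*x - x),
    mul_nonneg (mul_nonneg hx.le hx.le) ht,
    mul_nonneg (mul_nonneg ht ht) hx.le,
    mul_nonneg (mul_nonneg (mul_nonneg hx.le hx.le) ht) (sq_nonneg (1-t)),
    mul_pos hx (sub_pos.mpr h)]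

theorem stmt18 (lam : ℕ → ℝ) (C : ℝ)
    (hmom : ∀ z : ℝ, 2 ≤ z → |∑ p ∈ (⌊z⌋₊ + 1).primesBelow, (lam p ^ 2 - 1) / p| ≤ C)
    (hpos1 : ∀ p : ℕ, p.Prime → 0 < 1 - lam p ^ 2 / p)
    (hpos2 : ∀ p : ℕ, p.Prime → 0 < 1 - (1 - |lam p|)^2 / p) :
    ∃ K > 0, ∀ z : ℝ, 2 ≤ z →
      ∏ p ∈ (⌊z⌋₊ + 1).primesBelow,
          ((1 + |lam p| / p)^2 * (1 - lam p ^ 2 / p) * (1 - 1/(p:ℝ)))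
        ≤ K * ∏ p ∈ (⌊z⌋₊ + 1).primesBelow, (1 - (1 - |lam p|)^2 / p) := by
  refine ⟨1, one_pos, fun z hz => ?_⟩
  rw [one_mul]
  apply Finset.prod_le_prod
  · intro p hp
    have hprime := Nat.prime_of_mem_primesBelow hp
    have hp2 : (2:ℝ) ≤ p := by exact_mod_cast hprime.two_le
    have hp0 : (0:ℝ) < p := by linarith
    have h1 : (0:ℝ) < 1 - 1/(p:ℝ) := by
      rw [sub_pos, div_lt_one hp0]; linarith
    have := hpos1 p hprime
    positivity
  · intro p hp
    have hprime := Nat.prime_of_mem_primesBelow hp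
    have hp2 : (2:ℝ) ≤ p := by exact_mod_cast hprime.two_le
    have hp0 : (0:ℝ) < p := by linarith
    have hx : 0 < 1/(p:ℝ) := by positivity
    have hx2 : 1/(p:ℝ) ≤ 1/2 := by
      apply one_div_le_one_div_of_le <;> linarith
    have ht : 0 ≤ |lam p| := abs_nonneg _
    have hlt : |lam p|^2 * (1/(p:ℝ)) < 1 := by
      have := hpos1 p hprime
      rw [sq_abs]
      have : lam p ^ 2 / p < 1 := by linarith
      rw [mul_one_div]; exact this
    have := key18 (1/(p:ℝ)) |lam p| hx hx2 ht hlt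
    have e1 : |lam p| * (1/(p:ℝ)) = |lam p| / p := by ring
    have e2 : |lam p|^2 * (1/(p:ℝ)) = lam p ^ 2 / p := by
      rw [sq_abs]; ring
    have e3 : (1 - |lam p|)^2 * (1/(p:ℝ)) = (1 - |lam p|)^2 / p := by ring
    rw [e1, e2, e3] at this
    exact this
end
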